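/- arXiv:1205.1814 — 2 statements merged into one kernel-verified Lean document; each statement's English description precedes it below -/
import Mathlib

section
/- Let H be a Hopf algebra with invertible antipode, A a left H-module algebra, B = A#H. Suppose β : C → Z ⊗ H is a surjective B-module map admitting an A-linear section γ' (β∘γ' = id). Then the map γ : Z ⊗ H → C defined by γ(z ⊗ h) = h₍₂₎·γ'(S⁻¹(h₍₁₎)·z ⊗ 1) is a B-module section of β; in particular Z ⊗ H is a B-module direct summand of C. -/
/-!
Write `S⁻¹` for the inverse of the antipode and `f z = γ' (z ⊗ 1)`, so that
`γ (z ⊗ h) = ∑ h₂ • f (S⁻¹ h₁ • z)`. Everything follows from Sweedler calculus: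
`β ∘ γ = id` because `∑ h₂ S⁻¹(h₁) ⊗ h₃ = 1 ⊗ h`, and `H`-linearity because
`∑ S⁻¹(h₂) h₁ ⊗ h₃ = 1 ⊗ h`. For `A`-linearity, the smash relation in `Z` is applied to
`S⁻¹ h₁`, whose coproduct is `∑ S⁻¹ h₁₂ ⊗ S⁻¹ h₁₁`, and the result is matched, after one
use of coassociativity, with the smash relation in `C` solved for `a • (h • c)`, namely
`a • (h • c) = ∑ h₂ • ((S⁻¹ h₁ • a) • c)`.
-/

open TensorProduct

namespace Coalgebra

variable {R C M : Type*} [CommSemiring R] [AddCommMonoid C] [Module R C] [Coalgebra R C]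
  [AddCommMonoid M] [Module R M]

lemma sum_sum_trilinear_eq {a : C} {ι : Type*} {κ Λ : ι → Type*} (r : Repr R a ι)
    (ρ : (i : ι) → Repr R (r.left i) (κ i)) (σ : (i : ι) → Repr R (r.right i) (Λ i))
    (φ : C →ₗ[R] C →ₗ[R] C →ₗ[R] M) :
    ∑ i ∈ r.index, ∑ j ∈ (ρ i).index, φ ((ρ i).left j) ((ρ i).right j) (r.right i) =
      ∑ i ∈ r.index, ∑ j ∈ (σ i).index, φ (r.left i) ((σ i).left j) ((σ i).right j) := by
  simpa using congr(TensorProduct.lift (TensorProduct.uncurry (.id R) C C M ∘ₗ φ)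
    $(sum_tmul_tmul_eq r ρ σ))

lemma sum_sum_eq_of_comp_comul {H : Type*} [Semiring H] [Algebra R H] [Coalgebra R H]
    {g : H ⊗[R] H →ₗ[R] H} (hg : ∀ x, g (comul x) = algebraMap R H (counit x))
    (Φ : H →ₗ[R] H →ₗ[R] M) {a : H} {ι : Type*} {Λ : ι → Type*} (r : Repr R a ι)
    (σ : (i : ι) → Repr R (r.right i) (Λ i)) :
    ∑ i ∈ r.index, ∑ j ∈ (σ i).index, Φ (g (r.left i ⊗ₜ (σ i).left j)) ((σ i).right j) =
      Φ 1 a := by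
  have hcoassoc := sum_sum_trilinear_eq r (fun i ↦ ℛ R (r.left i)) σ
    ((TensorProduct.mk R H H).compr₂ (Φ ∘ₗ g))
  simp only [LinearMap.compr₂_apply, LinearMap.comp_apply, TensorProduct.mk_apply] at hcoassoc
  rw [← hcoassoc]
  calc _ = ∑ i ∈ r.index, Φ (g (comul (r.left i))) (r.right i) := by
        simp only [← (ℛ R (r.left _)).eq, map_sum, LinearMap.sum_apply]
    _ = Φ 1 a := by
        simp only [hg, Algebra.algebraMap_eq_smul_one, map_smul, LinearMap.smul_apply]
        simp only [← map_smul, ← map_sum, sum_counit_smul]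

end Coalgebra

namespace HopfAlgebra

open Coalgebra WithConv

variable {R H : Type*} [CommSemiring R] [Semiring H] [HopfAlgebra R H]

lemma sum_antipode_tmul_one_mul_comul {a : H} {ι : Type*} (r : Repr R a ι) :
    ∑ i ∈ r.index, (antipode R (r.left i) ⊗ₜ[R] (1 : H)) * comul (r.right i) = 1 ⊗ₜ a := by
  have hcancel := sum_sum_eq_of_comp_comul (g := LinearMap.mul' R H ∘ₗ (antipode R).rTensor H)
    mul_antipode_rTensor_comul_apply (TensorProduct.mk R H H) r (fun i ↦ ℛ R (r.right i))
  simp only [LinearMap.comp_apply, LinearMap.rTensor_tmul, LinearMap.mul'_apply,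
    TensorProduct.mk_apply] at hcancel
  simp [← hcancel, ← (ℛ R (r.right _)).eq, Finset.mul_sum]

/-- `(S ⊗ S) ∘ τ ∘ Δ` is a left convolution inverse of `Δ`, and `Δ ∘ S` a right one. -/
theorem comul_antipode (a : H) :
    comul (R := R) (antipode R a) =
      map (antipode R) (antipode R) (TensorProduct.comm R H H (comul a)) := by
  set G : H →ₗ[R] H ⊗[R] H :=
    map (antipode R) (antipode R) ∘ₗ (TensorProduct.comm R H H).toLinearMap ∘ₗ comul
  suffices hG : toConv G * toConv comul = 1 from
    congr($(left_inv_eq_right_inv hG LinearMap.comul_right_inv).ofConv a).symm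
  ext c
  set r := ℛ R c
  rw [r.convMul_apply, LinearMap.convOne_apply]
  have hG_apply (x : H) : G x = ∑ j ∈ (ℛ R x).index,
      antipode R ((ℛ R x).right j) ⊗ₜ antipode R ((ℛ R x).left j) := by
    simp [G, ← (ℛ R x).eq]
  have hcoassoc := sum_sum_trilinear_eq r (fun i ↦ ℛ R (r.left i)) (fun i ↦ ℛ R (r.right i))
    (((TensorProduct.mk R H H).compl₁₂ (antipode R) (antipode R)).flip.compr₂
      ((LinearMap.mul R (H ⊗[R] H)).compl₂ comul))
  simp only [LinearMap.compr₂_apply, LinearMap.compl₂_apply, LinearMap.flip_apply,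
    LinearMap.compl₁₂_apply, TensorProduct.mk_apply, LinearMap.mul_apply'] at hcoassoc
  calc ∑ i ∈ r.index, (toConv G) (r.left i) * (toConv comul) (r.right i)
      = ∑ i ∈ r.index, (1 ⊗ₜ antipode R (r.left i)) *
          ∑ j ∈ (ℛ R (r.right i)).index,
            (antipode R ((ℛ R (r.right i)).left j) ⊗ₜ[R] (1 : H)) *
              comul ((ℛ R (r.right i)).right j) := by
        simp only [hG_apply, Finset.sum_mul, Finset.mul_sum] at hcoassoc ⊢
        rw [hcoassoc]
        simp [← mul_assoc]
    _ = algebraMap R (H ⊗[R] H) (counit c) := by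
        rw [Algebra.TensorProduct.algebraMap_apply']
        simp [sum_antipode_tmul_one_mul_comul, ← TensorProduct.tmul_sum,
          sum_antipode_mul_eq_algebraMap_counit]

variable {T : H →ₗ[R] H}

lemma antipodeInv_one (hl : Function.LeftInverse T (antipode R)) : T 1 = 1 := by
  simpa using hl 1

lemma antipodeInv_mul (hl : Function.LeftInverse T (antipode R))
    (hr : Function.RightInverse T (antipode R)) (a b : H) : T (a * b) = T b * T a := by
  conv_lhs => rw [← hr a, ← hr b, ← antipode_mul_antidistrib, hl]

lemma comul_antipodeInv (hl : Function.LeftInverse T (antipode R))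
    (hr : Function.RightInverse T (antipode R)) (a : H) :
    comul (R := R) (T a) = map T T (TensorProduct.comm R H H (comul a)) := by
  have hinv : map T T ∘ₗ (TensorProduct.comm R H H).toLinearMap ∘ₗ
      map (antipode R) (antipode R) ∘ₗ (TensorProduct.comm R H H).toLinearMap = .id := by
    ext x y
    simp [hl x, hl y]
  conv_rhs => rw [← hr a, comul_antipode]
  exact congr($hinv (comul (T a))).symm

def _root_.Coalgebra.Repr.antipodeInv (hl : Function.LeftInverse T (antipode R))
    (hr : Function.RightInverse T (antipode R)) {a : H} {ι : Type*} (r : Repr R a ι) :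
    Repr R (T a) ι where
  index := r.index
  left i := T (r.right i)
  right i := T (r.left i)
  eq := by simp [comul_antipodeInv hl hr, ← r.eq]

variable {M : Type*} [AddCommMonoid M] [Module R M]

lemma sum_sum_mul_antipodeInv (hl : Function.LeftInverse T (antipode R))
    (hr : Function.RightInverse T (antipode R)) (Φ : H →ₗ[R] H →ₗ[R] M)
    {a : H} {ι : Type*} {Λ : ι → Type*} (r : Repr R a ι) (σ : (i : ι) → Repr R (r.right i) (Λ i)) :
    ∑ i ∈ r.index, ∑ j ∈ (σ i).index, Φ ((σ i).left j * T (r.left i)) ((σ i).right j) = Φ 1 a := by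
  have hg (x : H) : (LinearMap.mul' R H ∘ₗ (TensorProduct.comm R H H).toLinearMap ∘ₗ
      T.rTensor H) (comul x) = algebraMap R H (counit x) := by
    calc _ = T (∑ i ∈ (ℛ R x).index, (ℛ R x).left i * antipode R ((ℛ R x).right i)) := by
          simp [← (ℛ R x).eq, antipodeInv_mul hl hr, hl _]
      _ = _ := by
          rw [sum_mul_antipode_eq_smul, map_smul, antipodeInv_one hl,
            Algebra.algebraMap_eq_smul_one]
  simpa using sum_sum_eq_of_comp_comul hg Φ r σ

lemma sum_sum_antipodeInv_mul (hl : Function.LeftInverse T (antipode R))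
    (hr : Function.RightInverse T (antipode R)) (Φ : H →ₗ[R] H →ₗ[R] M)
    {a : H} {ι : Type*} {Λ : ι → Type*} (r : Repr R a ι) (σ : (i : ι) → Repr R (r.right i) (Λ i)) :
    ∑ i ∈ r.index, ∑ j ∈ (σ i).index, Φ (T ((σ i).left j) * r.left i) ((σ i).right j) = Φ 1 a := by
  have hg (x : H) : (LinearMap.mul' R H ∘ₗ (TensorProduct.comm R H H).toLinearMap ∘ₗ
      T.lTensor H) (comul x) = algebraMap R H (counit x) := by
    calc _ = T (∑ i ∈ (ℛ R x).index, antipode R ((ℛ R x).left i) * (ℛ R x).right i) := by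
          simp [← (ℛ R x).eq, antipodeInv_mul hl hr, hl _]
      _ = _ := by
          rw [sum_antipode_mul_eq_smul, map_smul, antipodeInv_one hl,
            Algebra.algebraMap_eq_smul_one]
  simpa using sum_sum_eq_of_comp_comul hg Φ r σ

end HopfAlgebra


open TensorProduct

noncomputable section

namespace Hopfological

variable (k : Type*) [Field k]

/-- The scalar action of a `k`-algebra `R` on a module `M`, as a `k`-bilinear map. -/
def actL (R M : Type*) [Ring R] [Algebra k R] [AddCommGroup M] [Module k M]
    [Module R M] [IsScalarTower k R M] [SMulCommClass k R M] :
    R →ₗ[k] M →ₗ[k] M :=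
  LinearMap.mk₂ k (· • ·) (fun r r' m => add_smul r r' m) (fun c r m => smul_assoc c r m)
    (fun r m m' => smul_add r m m') (fun c r m => (smul_comm c r m).symm)

@[simp] lemma actL_apply (R M : Type*) [Ring R] [Algebra k R] [AddCommGroup M] [Module k M]
    [Module R M] [IsScalarTower k R M] [SMulCommClass k R M] (r : R) (m : M) :
    actL k R M r m = r • m := rfl

variable (H : Type*) [Ring H] [HopfAlgebra k H]

/-- The diagonal (Sweedler) action of `H` on a tensor product, built from two given
`k`-linear actions `ρM`, `ρN`:  `h • (m ⊗ n) = ∑ ρM h₁ m ⊗ ρN h₂ n`. -/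
def tenActVia {M N : Type*} [AddCommGroup M] [Module k M] [AddCommGroup N] [Module k N]
    (ρM : H →ₗ[k] M →ₗ[k] M) (ρN : H →ₗ[k] N →ₗ[k] N) :
    H →ₗ[k] (M ⊗[k] N) →ₗ[k] (M ⊗[k] N) :=
  (TensorProduct.lift (((TensorProduct.mapBilinear (RingHom.id k) M N M N).comp ρM).compl₂ ρN)).comp
    (Coalgebra.comul (R := k))

/-- The conjugation (Sweedler) action of `H` on `k`-linear maps:
`(h • f) m = ∑ ρN h₂ (f (ρM (S⁻¹ h₁) m))`. -/
def conjAct (Sinv : H →ₗ[k] H) {M N : Type*} [AddCommGroup M] [Module k M]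
    [AddCommGroup N] [Module k N]
    (ρM : H →ₗ[k] M →ₗ[k] M) (ρN : H →ₗ[k] N →ₗ[k] N) :
    H →ₗ[k] (M →ₗ[k] N) →ₗ[k] (M →ₗ[k] N) :=
  (TensorProduct.lift (LinearMap.mk₂ k
      (fun h₁ h₂ => (LinearMap.llcomp k M N N (ρN h₂)).comp
        (LinearMap.lcomp k N (ρM (Sinv h₁))))
      (fun h₁ h₁' h₂ => by ext f m; simp)
      (fun c h₁ h₂ => by ext f m; simp)
      (fun h₁ h₂ h₂' => by ext f m; simp)
      (fun c h₁ h₂ => by ext f m; simp))).comp (Coalgebra.comul (R := k))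

/-- `A` is a left `H`-module algebra with respect to the action `ρ`. -/
def IsModuleAlgebraVia (A : Type*) [Ring A] [Algebra k A]
    (ρ : H →ₗ[k] A →ₗ[k] A) : Prop :=
  (∀ (h h' : H) (a : A), ρ (h * h') a = ρ h (ρ h' a)) ∧
  (∀ a : A, ρ 1 a = a) ∧
  (∀ (h : H) (a b : A),
    ρ h (a * b) = LinearMap.mul' k A (tenActVia k H ρ ρ h (a ⊗ₜ[k] b))) ∧
  (∀ h : H, ρ h 1 = Coalgebra.counit (R := k) h • (1 : A))

/-- `M` is a module over the smash product `A#H`: the `H`- and `A`-actions satisfy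
`h • (a • m) = ∑ (h₁ • a) • (h₂ • m)`. -/
def IsSmashModule (A M : Type*) [Ring A] [Algebra k A] [AddCommGroup M] [Module k M]
    [Module A M] [IsScalarTower k A M] [SMulCommClass k A M]
    [Module H A] [IsScalarTower k H A] [SMulCommClass k H A]
    [Module H M] [IsScalarTower k H M] [SMulCommClass k H M] : Prop :=
  ∀ (h : H) (a : A) (m : M),
    h • (a • m) =
      TensorProduct.lift
        (LinearMap.mk₂ k (· • ·) (fun a a' m => add_smul a a' m)
          (fun c a m => smul_assoc c a m) (fun a m m' => smul_add a m m')
          (fun c a m => (smul_comm c a m).symm))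
        (tenActVia k H (actL k H A) (actL k H M) h (a ⊗ₜ[k] m))


variable (A : Type*) [Ring A] [Algebra k A]
  [Module H A] [IsScalarTower k H A] [SMulCommClass k H A]
variable (C Z : Type*) [AddCommGroup C] [Module k C]
  [Module A C] [IsScalarTower k A C] [SMulCommClass k A C]
  [Module H C] [IsScalarTower k H C] [SMulCommClass k H C]
  [AddCommGroup Z] [Module k Z]
  [Module A Z] [IsScalarTower k A Z] [SMulCommClass k A Z]
  [Module H Z] [IsScalarTower k H Z] [SMulCommClass k H Z]

/-- The `B`-linear section `γ : Z ⊗ H → C`, `γ(z ⊗ h) = ∑ h₂ • γ'((S⁻¹(h₁) • z) ⊗ 1)`,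
built from an `A`-linear section `γ'`. -/
def gammaMap (Sinv : H →ₗ[k] H) (γ' : Z ⊗[k] H →ₗ[k] C) : Z ⊗[k] H →ₗ[k] C :=
  TensorProduct.lift
    ((TensorProduct.lift
        (LinearMap.mk₂ k
          (fun h₁ h₂ =>
            (actL k H C h₂) ∘ₗ γ' ∘ₗ ((TensorProduct.mk k Z H).flip 1)
              ∘ₗ (actL k H Z (Sinv h₁)))
          (fun h₁ h₁' h₂ => by ext z; simp [TensorProduct.add_tmul])
          (fun c h₁ h₂ => by
            ext z
            simp only [LinearMap.coe_comp, Function.comp_apply, actL_apply,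
              LinearMap.flip_apply, TensorProduct.mk_apply, map_smul, smul_assoc,
              LinearMap.smul_apply]
            )
          (fun h₁ h₂ h₂' => by ext z; simp)
          (fun c h₁ h₂ => by ext z; simp)) ∘ₗ (Coalgebra.comul (R := k))).flip)

open Coalgebra HopfAlgebra

section

variable {k H A C Z}

lemma tenActVia_tmul {M N : Type*} [AddCommGroup M] [Module k M] [AddCommGroup N] [Module k N]
    (ρM : H →ₗ[k] M →ₗ[k] M) (ρN : H →ₗ[k] N →ₗ[k] N) {h : H} {ι : Type*} (r : Repr k h ι)
    (m : M) (n : N) :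
    tenActVia k H ρM ρN h (m ⊗ₜ n) = ∑ i ∈ r.index, ρM (r.left i) m ⊗ₜ ρN (r.right i) n := by
  simp [tenActVia, ← r.eq]

section SmashModule

variable {M : Type*} [AddCommGroup M] [Module k M]
  [Module A M] [IsScalarTower k A M] [SMulCommClass k A M]
  [Module H M] [IsScalarTower k H M] [SMulCommClass k H M]

lemma IsSmashModule.smul_smul_eq_sum (hM : IsSmashModule k H A M) {h : H} {ι : Type*}
    (r : Repr k h ι) (a : A) (m : M) :
    h • a • m = ∑ i ∈ r.index, (r.left i • a) • r.right i • m := by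
  simp [hM h a m, tenActVia_tmul _ _ r]

lemma IsSmashModule.antipodeInv_smul_smul_eq_sum (hM : IsSmashModule k H A M) {T : H →ₗ[k] H}
    (hl : Function.LeftInverse T (antipode k)) (hr : Function.RightInverse T (antipode k))
    {h : H} {ι : Type*} (r : Repr k h ι) (a : A) (m : M) :
    T h • a • m = ∑ i ∈ r.index, (T (r.right i) • a) • T (r.left i) • m :=
  hM.smul_smul_eq_sum (r.antipodeInv hl hr) a m

lemma IsSmashModule.smul_smul_eq_sum_smul_antipodeInv (hM : IsSmashModule k H A M)
    {T : H →ₗ[k] H} (hl : Function.LeftInverse T (antipode k))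
    (hr : Function.RightInverse T (antipode k)) {h : H} {ι : Type*} (r : Repr k h ι)
    (a : A) (m : M) :
    a • h • m = ∑ i ∈ r.index, r.right i • (T (r.left i) • a) • m := by
  have hcancel := sum_sum_mul_antipodeInv hl hr
    ((actL k A M ∘ₗ (actL k H A).flip a).compl₂ ((actL k H M).flip m)) r
    (fun i ↦ ℛ k (r.right i))
  simp only [LinearMap.compl₂_apply, LinearMap.comp_apply, LinearMap.flip_apply, actL_apply,
    mul_smul, one_smul] at hcancel
  simp only [← hcancel, hM.smul_smul_eq_sum (ℛ k (r.right _))]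

end SmashModule

lemma gammaMap_tmul (T : H →ₗ[k] H) (γ' : Z ⊗[k] H →ₗ[k] C) (z : Z) {h : H} {ι : Type*}
    (r : Repr k h ι) :
    gammaMap k H C Z T γ' (z ⊗ₜ h) = ∑ i ∈ r.index, r.right i • γ' ((T (r.left i) • z) ⊗ₜ 1) := by
  simp [gammaMap, ← r.eq]

lemma gammaMap_tmul_mul {T : H →ₗ[k] H} (hl : Function.LeftInverse T (antipode k))
    (hr : Function.RightInverse T (antipode k)) (γ' : Z ⊗[k] H →ₗ[k] C) (z : Z) {w : H}
    {ι : Type*} (s : Repr k w ι) (h : H) :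
    gammaMap k H C Z T γ' (z ⊗ₜ (w * h)) =
      ∑ q ∈ s.index, s.right q • gammaMap k H C Z T γ' ((T (s.left q) • z) ⊗ₜ h) := by
  simp only [gammaMap_tmul T γ' _ (s.mul (ℛ k h)), gammaMap_tmul T γ' _ (ℛ k h),
    Repr.mul_index, Repr.mul_left, Repr.mul_right, Finset.sum_product, Finset.smul_sum,
    antipodeInv_mul hl hr, mul_smul]

lemma beta_gammaMap {T : H →ₗ[k] H} (hl : Function.LeftInverse T (antipode k))
    (hr : Function.RightInverse T (antipode k)) {β : C →ₗ[k] Z ⊗[k] H}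
    (hβH : ∀ (h : H) (c : C), β (h • c) = tenActVia k H (actL k H Z) (actL k H H) h (β c))
    {γ' : Z ⊗[k] H →ₗ[k] C} (hsec : ∀ x, β (γ' x) = x) (x : Z ⊗[k] H) :
    β (gammaMap k H C Z T γ' x) = x := by
  induction x using TensorProduct.induction_on with
  | zero => simp
  | add x y hx hy => simp only [map_add, hx, hy]
  | tmul z h =>
    have hcancel := sum_sum_mul_antipodeInv hl hr ((TensorProduct.mk k Z H) ∘ₗ (actL k H Z).flip z)
      (ℛ k h) (fun i ↦ ℛ k ((ℛ k h).right i))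
    simp only [LinearMap.comp_apply, LinearMap.flip_apply, actL_apply, TensorProduct.mk_apply,
      one_smul] at hcancel
    refine Eq.trans ?_ hcancel
    simp [gammaMap_tmul T γ' z (ℛ k h), hβH, hsec, tenActVia_tmul _ _ (ℛ k ((ℛ k h).right _)),
      mul_smul]

lemma gammaMap_tenActVia {T : H →ₗ[k] H} (hl : Function.LeftInverse T (antipode k))
    (hr : Function.RightInverse T (antipode k)) (γ' : Z ⊗[k] H →ₗ[k] C) (h' : H)
    (x : Z ⊗[k] H) :
    gammaMap k H C Z T γ' (tenActVia k H (actL k H Z) (actL k H H) h' x) =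
      h' • gammaMap k H C Z T γ' x := by
  induction x using TensorProduct.induction_on with
  | zero => simp
  | add x y hx hy => simp only [map_add, hx, hy, smul_add]
  | tmul z h =>
    have hcancel := sum_sum_antipodeInv_mul hl hr ((actL k H C).flip ∘ₗ gammaMap k H C Z T γ' ∘ₗ
      (TensorProduct.mk k Z H).flip h ∘ₗ (actL k H Z).flip z) (ℛ k h')
      (fun p ↦ ℛ k ((ℛ k h').right p))
    simp only [LinearMap.comp_apply, LinearMap.flip_apply, actL_apply, TensorProduct.mk_apply,
      one_smul] at hcancel
    refine Eq.trans ?_ hcancel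
    simp [tenActVia_tmul _ _ (ℛ k h'), gammaMap_tmul_mul hl hr γ' _ (ℛ k ((ℛ k h').right _)),
      mul_smul]

lemma gammaMap_map_smul {T : H →ₗ[k] H} (hl : Function.LeftInverse T (antipode k))
    (hr : Function.RightInverse T (antipode k)) (hC : IsSmashModule k H A C)
    (hZ : IsSmashModule k H A Z) {γ' : Z ⊗[k] H →ₗ[k] C}
    (hγ'A : ∀ (a : A) (x : Z ⊗[k] H),
      γ' (TensorProduct.map (actL k A Z a) LinearMap.id x) = a • γ' x) (a : A) (x : Z ⊗[k] H) :
    gammaMap k H C Z T γ' (TensorProduct.map (actL k A Z a) LinearMap.id x) =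
      a • gammaMap k H C Z T γ' x := by
  induction x using TensorProduct.induction_on with
  | zero => simp
  | add x y hx hy => simp only [map_add, hx, hy, smul_add]
  | tmul z h =>
    have hγ' (a : A) (z : Z) : γ' ((a • z) ⊗ₜ 1) = a • γ' (z ⊗ₜ 1) := by
      simpa using hγ'A a (z ⊗ₜ 1)
    set r := ℛ k h
    set f : H →ₗ[k] C := γ' ∘ₗ (TensorProduct.mk k Z H).flip 1 ∘ₗ (actL k H Z).flip z ∘ₗ T
    have hcoassoc := sum_sum_trilinear_eq r (fun i ↦ ℛ k (r.left i)) (fun i ↦ ℛ k (r.right i))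
      ((((actL k A C) ∘ₗ (actL k H A).flip a ∘ₗ T).flip ∘ₗ f).compr₂ (actL k H C).flip)
    simp only [f, LinearMap.compr₂_apply, LinearMap.comp_apply, LinearMap.flip_apply, actL_apply,
      TensorProduct.mk_apply] at hcoassoc
    calc _ = ∑ i ∈ r.index, ∑ j ∈ (ℛ k (r.left i)).index, r.right i •
          (T ((ℛ k (r.left i)).right j) • a) • γ' ((T ((ℛ k (r.left i)).left j) • z) ⊗ₜ 1) := by
          simp [gammaMap_tmul T γ' _ r, hZ.antipodeInv_smul_smul_eq_sum hl hr (ℛ k (r.left _)),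
            TensorProduct.sum_tmul, hγ', Finset.smul_sum]
      _ = _ := hcoassoc
      _ = a • gammaMap k H C Z T γ' (z ⊗ₜ h) := by
          simp [gammaMap_tmul T γ' z r, Finset.smul_sum,
            hC.smul_smul_eq_sum_smul_antipodeInv hl hr (ℛ k (r.right _))]

end

theorem gammaMap_B_section
    (Sinv : H →ₗ[k] H)
    (hS₁ : ∀ h : H, Sinv (HopfAlgebra.antipode (R := k) h) = h)
    (hS₂ : ∀ h : H, HopfAlgebra.antipode (R := k) (Sinv h) = h)
    (hC : IsSmashModule k H A C) (hZ : IsSmashModule k H A Z)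
    (β : C →ₗ[k] Z ⊗[k] H)
    (hβH : ∀ (h : H) (c : C),
        β (h • c) = tenActVia k H (actL k H Z) (actL k H H) h (β c))
    (γ' : Z ⊗[k] H →ₗ[k] C)
    (hγ'A : ∀ (a : A) (x : Z ⊗[k] H),
        γ' (TensorProduct.map (actL k A Z a) LinearMap.id x) = a • γ' x)
    (hsec : ∀ x : Z ⊗[k] H, β (γ' x) = x) :
    (∀ (a : A) (x : Z ⊗[k] H),
        gammaMap k H C Z Sinv γ' (TensorProduct.map (actL k A Z a) LinearMap.id x)
          = a • gammaMap k H C Z Sinv γ' x) ∧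
    (∀ (h : H) (x : Z ⊗[k] H),
        gammaMap k H C Z Sinv γ' (tenActVia k H (actL k H Z) (actL k H H) h x)
          = h • gammaMap k H C Z Sinv γ' x) ∧
    (∀ x : Z ⊗[k] H, β (gammaMap k H C Z Sinv γ' x) = x) :=
  ⟨gammaMap_map_smul hS₁ hS₂ hC hZ hγ'A, gammaMap_tenActVia hS₁ hS₂ γ',
    beta_gammaMap hS₁ hS₂ hβH hsec⟩

end Hopfological
end
end

section
/- Let n ≥ 2 and let ζ be a primitive n-th root of unity in a field k of characteristic zero. In the Taft algebra H_n generated by K, K⁻¹, d with K^n = 1, Kd = ζdK, d^n = 0, the element Λ = (1/n)(Σ_{i=0}^{n-1} K^i)d^{n-1} is a left integral: hΛ = ε(h)Λ for all h ∈ H_n, where ε(K) = 1 and ε(d) = 0. -/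
/-! `Λ` is annihilated by `d` because `d` can be moved past each `K ^ i` at the cost of a scalar,
where it meets `d ^ (n - 1)` and gives `d ^ n = 0`; and `K` fixes `Λ` because left multiplication by
`K` permutes the powers `1, K, …, K ^ (n - 1)`. Since `h ↦ ε(h)` is multiplicative, the elements
`h` with `hΛ = ε(h)Λ` form a subalgebra, so it suffices to check the generators `K` and `d`. -/

open TensorProduct

noncomputable section

namespace Hopfological

variable (k : Type*) [Field k]

variable (H : Type*) [Ring H] [HopfAlgebra k H]

section QCommuting

variable {R A : Type*} [CommSemiring R] [Semiring A] [Algebra R A] {x y : A} {c : R}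

theorem pow_mul_eq_smul_mul_pow (hxy : x * y = c • (y * x)) (i : ℕ) :
    x ^ i * y = c ^ i • (y * x ^ i) := by
  induction i with
  | zero => simp
  | succ i ih =>
    rw [pow_succ, mul_assoc, hxy, mul_smul_comm, ← mul_assoc, ih, smul_mul_assoc, smul_smul,
      mul_assoc, ← pow_succ, ← pow_succ']

/-- `x ^ (n - i)` inverts `x ^ i`, so `y` crosses `x ^ i` leftwards without inverting `c`. -/
theorem mul_pow_eq_smul_pow_mul_of_pow_eq_one {n : ℕ} (hx : x ^ n = 1)
    (hxy : x * y = c • (y * x)) {i : ℕ} (hi : i ≤ n) :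
    y * x ^ i = c ^ (n - i) • (x ^ i * y) := by
  calc y * x ^ i = x ^ i * (x ^ (n - i) * y) * x ^ i := by
        rw [← mul_assoc, ← pow_add, Nat.add_sub_cancel' hi, hx, one_mul]
    _ = c ^ (n - i) • (x ^ i * y * x ^ n) := by
        rw [pow_mul_eq_smul_mul_pow hxy, mul_smul_comm, smul_mul_assoc, ← mul_assoc,
          mul_assoc _ _ (x ^ i), ← pow_add, Nat.sub_add_cancel hi]
    _ = c ^ (n - i) • (x ^ i * y) := by rw [hx, mul_one]

theorem mul_geom_sum_mul_pow_pred_eq_zero {n : ℕ} (hx : x ^ n = 1)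
    (hxy : x * y = c • (y * x)) (hy : y ^ n = 0) :
    y * ((∑ i ∈ Finset.range n, x ^ i) * y ^ (n - 1)) = 0 := by
  rw [← mul_assoc, Finset.mul_sum, Finset.sum_mul]
  refine Finset.sum_eq_zero fun i hi => ?_
  have hin : i < n := Finset.mem_range.mp hi
  rw [mul_pow_eq_smul_pow_mul_of_pow_eq_one hx hxy hin.le, smul_mul_assoc, mul_assoc,
    ← pow_succ', Nat.sub_add_cancel (by omega), hy, mul_zero, smul_zero]

end QCommuting

theorem mul_geom_sum_eq_of_pow_eq_one {R : Type*} [Ring R] {x : R} {n : ℕ} (hx : x ^ n = 1) :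
    x * ∑ i ∈ Finset.range n, x ^ i = ∑ i ∈ Finset.range n, x ^ i := by
  rw [← sub_eq_zero, ← sub_one_mul, mul_geom_sum, hx, sub_self]

theorem mul_eq_counit_smul_of_adjoin_eq_top {R B : Type*} [CommSemiring R] [Semiring B]
    [Bialgebra R B] {s : Set B} (hs : Algebra.adjoin R s = ⊤) {Λ : B}
    (hΛ : ∀ x ∈ s, x * Λ = Coalgebra.counit (R := R) x • Λ) (h : B) :
    h * Λ = Coalgebra.counit (R := R) h • Λ := by
  induction (hs ▸ Algebra.mem_top : h ∈ Algebra.adjoin R s) using Algebra.adjoin_induction with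
  | mem x hx => exact hΛ x hx
  | algebraMap r => rw [Bialgebra.counit_algebraMap, Algebra.smul_def]
  | add x y _ _ ihx ihy => rw [add_mul, ihx, ihy, map_add, add_smul]
  | mul x y _ _ ihx ihy =>
    rw [mul_assoc, ihy, mul_smul_comm, ihx, Bialgebra.counit_mul, mul_comm, mul_smul]

theorem taft_left_integral
    (n : ℕ) (ζ : k)
    (K d : H)
    (hK : K ^ n = 1)
    (hKd : K * d = ζ • (d * K))
    (hd : d ^ n = 0)
    (hcounitK : Coalgebra.counit (R := k) K = 1)
    (hcounitd : Coalgebra.counit (R := k) d = 0)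
    (hgen : Algebra.adjoin k ({K, d} : Set H) = ⊤) :
    ∀ h : H,
      h * ((n : k)⁻¹ • ((∑ i ∈ Finset.range n, K ^ i) * d ^ (n - 1)))
        = Coalgebra.counit (R := k) h •
            ((n : k)⁻¹ • ((∑ i ∈ Finset.range n, K ^ i) * d ^ (n - 1))) := by
  refine mul_eq_counit_smul_of_adjoin_eq_top hgen ?_
  rintro x (rfl | rfl)
  · rw [hcounitK, one_smul, mul_smul_comm, ← mul_assoc, mul_geom_sum_eq_of_pow_eq_one hK]
  · rw [hcounitd, zero_smul, mul_smul_comm, mul_geom_sum_mul_pow_pred_eq_zero hK hKd hd,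
      smul_zero]

end Hopfological
end
end
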